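/- arXiv:1808.00893 — 4 statements merged into one kernel-verified Lean document; each statement's English description precedes it below -/
import Mathlib

section
/- For any nonnegative reals a, b and any strictly increasing continuous bijection ρ : ℝ≥0 → ℝ≥0 with ρ(0)=0, and any K∞ function λ̄ with λ̄(s) > s for all s > 0 (so that λ̄ − id is also a K∞ function), one has ρ(a + b) ≤ ρ(λ̄(a)) + ρ(λ̄((λ̄ − id)⁻¹(b))). -/
/-! With `c = max a (g b)` we have `a ≤ c` and `b = (λ̄ − id)(g b) ≤ (λ̄ − id)(c)`, hence
`a + b ≤ c + (λ̄(c) − c) = λ̄(c)`, and `λ̄(c)` is one of `λ̄(a)`, `λ̄(g b)`. Monotonicity of `ρ`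
then bounds `ρ(a + b)` by the larger of the two terms on the right. -/

open NNReal

section CanonicallyOrdered

variable {α : Type*} [AddCommMonoid α] [LinearOrder α] [CanonicallyOrderedAdd α] [Sub α]
  [OrderedSub α]

/-- In truncated subtraction `f 0 - 0` is nonnegative, so strict monotonicity of `f - id`
already forces `f s - s > 0`, i.e. `s < f s`, away from `0`. -/
theorem le_of_strictMono_tsub_id {f : α → α} (hd : StrictMono fun s => f s - s) (s : α) :
    s ≤ f s := by
  rcases (zero_le : 0 ≤ s).eq_or_lt with rfl | hs
  · exact zero_le
  · exact (tsub_pos_iff_lt.mp (zero_le.trans_lt (hd hs))).le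

theorem add_le_max_of_rightInverse_tsub_id {f g : α → α} (hd : StrictMono fun s => f s - s)
    (hg : Function.RightInverse g fun s => f s - s) (a b : α) :
    a + b ≤ max (f a) (f (g b)) := by
  set c := max a (g b)
  have hb : b ≤ f c - c := calc
    b = f (g b) - g b := (hg b).symm
    _ ≤ f c - c := hd.monotone (le_max_right _ _)
  calc a + b ≤ c + (f c - c) := add_le_add (le_max_left _ _) hb
    _ = f c := add_tsub_cancel_of_le (le_of_strictMono_tsub_id hd c)
    _ ≤ max (f a) (f (g b)) := by
      rcases max_choice a (g b) with h | h <;> simp [c, h]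

end CanonicallyOrdered

theorem rho_add_split_general (ρ lam g : ℝ≥0 → ℝ≥0)
    (hρm : StrictMono ρ)
    -- λ̄ − id is a K∞ function
    (hdm : StrictMono (fun s => lam s - s))
    -- g is the inverse of λ̄ − id
    (hgr : Function.RightInverse g (fun s => lam s - s)) :
    ∀ a b : ℝ≥0, ρ (a + b) ≤ ρ (lam a) + ρ (lam (g b)) := by
  intro a b
  calc ρ (a + b) ≤ ρ (max (lam a) (lam (g b))) :=
        hρm.monotone (add_le_max_of_rightInverse_tsub_id hdm hgr a b)
    _ = max (ρ (lam a)) (ρ (lam (g b))) := hρm.monotone.map_max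
    _ ≤ ρ (lam a) + ρ (lam (g b)) := max_le_add_of_nonneg zero_le zero_le

/-- Weak-triangle-type inequality for `K∞` scalings:
`ρ(a + b) ≤ ρ(λ̄(a)) + ρ(λ̄((λ̄ − id)⁻¹(b)))`. -/
theorem rho_add_split (ρ lam g : ℝ≥0 → ℝ≥0)
    (hρc : Continuous ρ) (hρm : StrictMono ρ) (hρb : Function.Bijective ρ)
    (hρ0 : ρ 0 = 0)
    (hlc : Continuous lam) (hlm : StrictMono lam) (hl0 : lam 0 = 0)
    (hltop : Filter.Tendsto lam Filter.atTop Filter.atTop)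
    (hgt : ∀ s : ℝ≥0, 0 < s → s < lam s)
    -- λ̄ − id is a K∞ function
    (hdc : Continuous (fun s => lam s - s))
    (hdm : StrictMono (fun s => lam s - s))
    (hdtop : Filter.Tendsto (fun s => lam s - s) Filter.atTop Filter.atTop)
    -- g is the inverse of λ̄ − id
    (hgl : Function.LeftInverse g (fun s => lam s - s))
    (hgr : Function.RightInverse g (fun s => lam s - s)) :
    ∀ a b : ℝ≥0, ρ (a + b) ≤ ρ (lam a) + ρ (lam (g b)) :=
  rho_add_split_general ρ lam g hρm hdm hgr
end

section
/- Suppose V : X × X̂ → ℝ≥0 and a Markov chain pair satisfies E[V(x(k+1), x̂(k+1)) | x(k), x̂(k)] ≤ max{κ(V(x(k), x̂(k))), ψ̂} along trajectories, where κ(s) ≥ κ̂·s for some 0 < κ̂ < 1 with κ < id, κ nondecreasing. If additionally α(ε) ≥ ψ̂/κ̂, then for any initial condition, P{ sup_{0≤k≤T} V ≥ α(ε) } ≤ 1 − (1 − V(a, â)/α(ε))(1 − ψ̂/α(ε))^T. (Special scalar supermartingale-type bound.) -/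
/-!
Let `c = 1 - ψ/α ∈ [0, 1]` and `h_n(v) = 1 - (1 - v/α) cⁿ`. Below `α` the drift gives
`E[V_{k+1} | F_k] ≤ ψ + c V_k`, and `h_n(ψ + c v) = h_{n+1}(v)`, so the process equal to `1` once
`α` has been reached and to `h_{T-k}(V_k)` before is a supermartingale up to time `T`
(`h_n ≥ 1` on `[α, ∞)` absorbs the jump at the hitting time). Its expectation decreases from at
most `h_T(V₀)` at time `0` to at least `P(sup_{k ≤ T} V_k ≥ α)` at time `T`, since `h_0 ≥ 0`.
-/

open MeasureTheory

lemma Monotone.apply_le_self_of_lt_self {κ : ℝ → ℝ} (hmono : Monotone κ)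
    (hlt : ∀ s : ℝ, 0 < s → κ s < s) {s : ℝ} (hs : 0 ≤ s) : κ s ≤ s := by
  rcases hs.eq_or_lt with rfl | hs
  · exact le_of_forall_gt fun t ht => (hmono ht.le).trans_lt (hlt t ht)
  · exact (hlt s hs).le

lemma max_apply_le_add_mul {κ : ℝ → ℝ} (hκ : ∀ s : ℝ, 0 ≤ s → κ s ≤ s) {ψ α v : ℝ}
    (hψ : 0 ≤ ψ) (hψα : ψ ≤ α) (hv : 0 ≤ v) (hvα : v ≤ α) :
    max (κ v) ψ ≤ ψ + (1 - ψ / α) * v := by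
  rcases hψ.eq_or_lt with rfl | hψ
  · simpa using ⟨hκ v hv, hv⟩
  have hα : 0 < α := hψ.trans_le hψα
  have hc : 0 ≤ 1 - ψ / α := by rw [sub_nonneg, div_le_one hα]; exact hψα
  have hψv : ψ / α * v ≤ ψ := by
    rw [div_mul_eq_mul_div, div_le_iff₀ hα]; exact mul_le_mul_of_nonneg_left hvα hψ.le
  refine max_le ?_ (le_add_of_nonneg_right (mul_nonneg hc hv))
  linarith [hκ v hv]

namespace MeasureTheory

variable {Ω : Type*} {m0 : MeasurableSpace Ω} {μ : Measure Ω}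

lemma setIntegral_le_of_ae_condExp_le {m : MeasurableSpace Ω} (hm : m ≤ m0)
    [SigmaFinite (μ.trim hm)] {s : Set Ω} (hs : MeasurableSet[m] s) {f g : Ω → ℝ}
    (hf : Integrable f μ) (hg : Integrable g μ) (hfg : ∀ᵐ ω ∂μ, ω ∈ s → μ[f|m] ω ≤ g ω) :
    ∫ ω in s, f ω ∂μ ≤ ∫ ω in s, g ω ∂μ := by
  rw [← setIntegral_condExp hm hf hs]
  exact setIntegral_mono_ae_restrict integrable_condExp.integrableOn hg.integrableOn
    ((ae_restrict_iff' (hm _ hs)).2 hfg)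

variable [IsFiniteMeasure μ]

lemma setIntegral_const_add_mul (a b : ℝ) {f : Ω → ℝ} (hf : Integrable f μ) (s : Set Ω) :
    ∫ ω in s, (a + b * f ω) ∂μ = a * μ.real s + b * ∫ ω in s, f ω ∂μ := by
  rw [integral_add (integrable_const a) (hf.const_mul b).integrableOn, setIntegral_const,
    integral_const_mul, smul_eq_mul, mul_comm]

lemma measureReal_add_setIntegral_compl_le_of_subset {s t : Set Ω} {f : Ω → ℝ}
    (hst : s ⊆ t) (hs : MeasurableSet s) (ht : MeasurableSet t) (hf : Integrable f μ)
    (hf_one : ∀ ω ∈ t \ s, 1 ≤ f ω) :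
    μ.real t + ∫ ω in tᶜ, f ω ∂μ ≤ μ.real s + ∫ ω in sᶜ, f ω ∂μ := by
  have hsplit : ∫ ω in sᶜ, f ω ∂μ = ∫ ω in t \ s, f ω ∂μ + ∫ ω in tᶜ, f ω ∂μ := by
    have hcompl : sᶜ = t \ s ∪ tᶜ := by
      ext ω; have := @hst ω; simp only [Set.mem_compl_iff, Set.mem_union, Set.mem_sdiff]; tauto
    rw [hcompl, setIntegral_union (disjoint_compl_right.mono_left Set.sdiff_subset) ht.compl
      hf.integrableOn hf.integrableOn]
  have hdiff : μ.real (t \ s) ≤ ∫ ω in t \ s, f ω ∂μ := by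
    simpa using setIntegral_mono_on (integrableOn_const (C := (1 : ℝ))) hf.integrableOn
      (ht.diff hs) hf_one
  rw [measureReal_sdiff hst hs] at hdiff
  linarith

end MeasureTheory

namespace Reachability

variable {Ω : Type*} {m0 : MeasurableSpace Ω}

/-- `h_n(v)`: the bound on the probability of reaching `α` within `n` steps from `v`. -/
noncomputable def reachBound (ψ α : ℝ) (n : ℕ) (v : ℝ) : ℝ := 1 - (1 - v / α) * (1 - ψ / α) ^ n

section reachBound

variable {ψ α : ℝ} {n : ℕ}

lemma reachBound_eq_add_mul (v : ℝ) :
    reachBound ψ α n v = (1 - (1 - ψ / α) ^ n) + (1 - ψ / α) ^ n / α * v := by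
  unfold reachBound; ring

lemma reachBound_succ (v : ℝ) :
    reachBound ψ α (n + 1) v = reachBound ψ α n (ψ + (1 - ψ / α) * v) := by
  unfold reachBound; ring

lemma reachBound_zero (v : ℝ) : reachBound ψ α 0 v = v / α := by
  simp [reachBound]

lemma one_le_reachBound (hα : 0 < α) (hψα : ψ ≤ α) {v : ℝ} (hv : α ≤ v) :
    1 ≤ reachBound ψ α n v := by
  have hc : 0 ≤ 1 - ψ / α := by rw [sub_nonneg, div_le_one hα]; exact hψα
  have hv' : 1 - v / α ≤ 0 := by rw [sub_nonpos, one_le_div hα]; exact hv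
  unfold reachBound
  nlinarith [pow_nonneg hc n]

variable {μ : Measure Ω} [IsFiniteMeasure μ]

lemma _root_.MeasureTheory.Integrable.reachBound_comp {f : Ω → ℝ} (hf : Integrable f μ) :
    Integrable (fun ω => reachBound ψ α n (f ω)) μ := by
  simp_rw [reachBound_eq_add_mul]
  exact (integrable_const _).add (hf.const_mul _)

lemma setIntegral_reachBound_comp_le (hα : 0 < α) (hψα : ψ ≤ α) {f g : Ω → ℝ}
    (hf : Integrable f μ) (hg : Integrable g μ) {s : Set Ω}
    (hfg : ∫ ω in s, f ω ∂μ ≤ ∫ ω in s, g ω ∂μ) :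
    ∫ ω in s, reachBound ψ α n (f ω) ∂μ ≤ ∫ ω in s, reachBound ψ α n (g ω) ∂μ := by
  have hc : 0 ≤ 1 - ψ / α := by rw [sub_nonneg, div_le_one hα]; exact hψα
  simp_rw [reachBound_eq_add_mul, setIntegral_const_add_mul _ _ hf,
    setIntegral_const_add_mul _ _ hg]
  gcongr

end reachBound

def reachedBy (V : ℕ → Ω → ℝ) (α : ℝ) (k : ℕ) : Set Ω := {ω | ∃ j ≤ k, α ≤ V j ω}

section reachedBy

variable {V : ℕ → Ω → ℝ} {α : ℝ}

lemma reachedBy_mono : Monotone (reachedBy V α) :=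
  fun _ _ hkl _ ⟨j, hj, hV⟩ => ⟨j, hj.trans hkl, hV⟩

lemma measurableSet_reachedBy {ℱ : Filtration ℕ m0} (hV : Adapted ℱ V) (k : ℕ) :
    MeasurableSet[ℱ k] (reachedBy V α k) := by
  have hunion : reachedBy V α k = ⋃ j ∈ Set.Iic k, {ω | α ≤ V j ω} := by
    ext; simp [reachedBy]
  rw [hunion]
  exact .biUnion (Set.to_countable _) fun j hj => ((hV j).mono (ℱ.mono hj) le_rfl) measurableSet_Ici

lemma lt_of_notMem_reachedBy {k : ℕ} {ω : Ω} (h : ω ∉ reachedBy V α k) : V k ω < α :=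
  not_le.1 fun hV => h ⟨k, le_rfl, hV⟩

lemma le_of_mem_reachedBy_succ_sdiff {k : ℕ} {ω : Ω}
    (h : ω ∈ reachedBy V α (k + 1) \ reachedBy V α k) : α ≤ V (k + 1) ω := by
  obtain ⟨⟨j, hj, hV⟩, hnot⟩ := h
  obtain rfl : j = k + 1 := by
    by_contra hne
    exact hnot ⟨j, by omega, hV⟩
  exact hV

end reachedBy

/-- The expectation of the stopped process `1_{reached by k} + 1_{not yet} · h_{T-k}(V_k)`. -/
noncomputable def reachValue (μ : Measure Ω) (V : ℕ → Ω → ℝ) (ψ α : ℝ) (T k : ℕ) : ℝ :=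
  μ.real (reachedBy V α k) + ∫ ω in (reachedBy V α k)ᶜ, reachBound ψ α (T - k) (V k ω) ∂μ

section reachValue

variable {μ : Measure Ω} {V : ℕ → Ω → ℝ} {ψ α : ℝ} {T : ℕ}

lemma measureReal_reachedBy_le_reachValue (hnonneg : ∀ ω, 0 ≤ V T ω) (hα : 0 < α) :
    μ.real (reachedBy V α T) ≤ reachValue μ V ψ α T T := by
  refine le_add_of_nonneg_right (integral_nonneg fun ω => ?_)
  rw [Nat.sub_self, reachBound_zero]
  exact div_nonneg (hnonneg ω) hα.le

variable [IsFiniteMeasure μ]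

lemma reachValue_succ_le {ℱ : Filtration ℕ m0} (hV : Adapted ℱ V) (hint : ∀ k, Integrable (V k) μ)
    (hα : 0 < α) (hψα : ψ ≤ α) {k : ℕ} (hkT : k < T)
    (hdrift : ∀ᵐ ω ∂μ, V k ω < α → μ[V (k + 1)|ℱ k] ω ≤ ψ + (1 - ψ / α) * V k ω) :
    reachValue μ V ψ α T (k + 1) ≤ reachValue μ V ψ α T k := by
  set S := reachedBy V α
  have hS : ∀ j, MeasurableSet (S j) := fun j => ℱ.le j _ (measurableSet_reachedBy hV j)
  have hdrift_int : Integrable (fun ω => ψ + (1 - ψ / α) * V k ω) μ :=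
    (integrable_const ψ).add ((hint k).const_mul _)
  have hTk : T - k = T - (k + 1) + 1 := by omega
  calc reachValue μ V ψ α T (k + 1)
      ≤ μ.real (S k) + ∫ ω in (S k)ᶜ, reachBound ψ α (T - (k + 1)) (V (k + 1) ω) ∂μ :=
        measureReal_add_setIntegral_compl_le_of_subset (reachedBy_mono k.le_succ) (hS k)
          (hS (k + 1)) (hint (k + 1)).reachBound_comp
          fun ω hω => one_le_reachBound hα hψα (le_of_mem_reachedBy_succ_sdiff hω)
    _ ≤ μ.real (S k) +
          ∫ ω in (S k)ᶜ, reachBound ψ α (T - (k + 1)) (ψ + (1 - ψ / α) * V k ω) ∂μ := by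
        gcongr 1
        refine setIntegral_reachBound_comp_le hα hψα (hint (k + 1)) hdrift_int ?_
        refine setIntegral_le_of_ae_condExp_le (ℱ.le k) (measurableSet_reachedBy hV k).compl
          (hint (k + 1)) hdrift_int ?_
        filter_upwards [hdrift] with ω hω hωS using hω (lt_of_notMem_reachedBy hωS)
    _ = reachValue μ V ψ α T k := by
        simp_rw [reachValue, hTk, reachBound_succ]
        rfl

lemma reachValue_le_reachValue_zero {ℱ : Filtration ℕ m0} (hV : Adapted ℱ V)
    (hint : ∀ k, Integrable (V k) μ) (hα : 0 < α) (hψα : ψ ≤ α)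
    (hdrift : ∀ k, ∀ᵐ ω ∂μ, V k ω < α → μ[V (k + 1)|ℱ k] ω ≤ ψ + (1 - ψ / α) * V k ω) :
    ∀ k ≤ T, reachValue μ V ψ α T k ≤ reachValue μ V ψ α T 0
  | 0, _ => le_rfl
  | k + 1, hk => (reachValue_succ_le hV hint hα hψα hk (hdrift k)).trans
      (reachValue_le_reachValue_zero hV hint hα hψα hdrift k (by omega))

lemma reachValue_zero_le (hint : Integrable (V 0) μ) (hα : 0 < α) (hψα : ψ ≤ α)
    (hS : MeasurableSet (reachedBy V α 0)) :
    reachValue μ V ψ α T 0 ≤ ∫ ω, reachBound ψ α T (V 0 ω) ∂μ := by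
  simpa [reachValue] using measureReal_add_setIntegral_compl_le_of_subset (Set.empty_subset _)
    MeasurableSet.empty hS hint.reachBound_comp fun ω ⟨⟨j, hj, hV⟩, _⟩ =>
      one_le_reachBound (n := T) hα hψα (by rwa [Nat.le_zero.1 hj] at hV)

end reachValue

end Reachability

open Reachability in
theorem reachability_bound_case1_general {Ω : Type*} {m0 : MeasurableSpace Ω}
    (μ : Measure Ω) [IsProbabilityMeasure μ]
    (ℱ : Filtration ℕ m0) (V : ℕ → Ω → ℝ)
    (hadp : Adapted ℱ V) (hint : ∀ k, Integrable (V k) μ)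
    (hnonneg : ∀ k ω, 0 ≤ V k ω)
    (κ : ℝ → ℝ) (hκmono : Monotone κ) (hκlt : ∀ s : ℝ, 0 < s → κ s < s)
    (khat : ℝ) (hkhat0 : 0 < khat) (hkhat1 : khat < 1)
    (psihat : ℝ) (hψ : 0 ≤ psihat)
    (hdrift : ∀ k, ∀ᵐ ω ∂μ, (μ[V (k + 1)|ℱ k]) ω ≤ max (κ (V k ω)) psihat)
    (v₀ : ℝ) (hV0 : ∀ ω, V 0 ω = v₀)
    (T : ℕ) (αε : ℝ) (hαε : 0 < αε) (hlevel : psihat / khat ≤ αε) :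
    μ {ω | ∃ k ≤ T, αε ≤ V k ω} ≤
      ENNReal.ofReal (1 - (1 - v₀ / αε) * (1 - psihat / αε) ^ T) := by
  have hψα : psihat ≤ αε := calc
    psihat ≤ αε * khat := (div_le_iff₀ hkhat0).1 hlevel
    _ ≤ αε := mul_le_of_le_one_right hαε.le hkhat1.le
  have hlinear : ∀ k, ∀ᵐ ω ∂μ, V k ω < αε →
      μ[V (k + 1)|ℱ k] ω ≤ psihat + (1 - psihat / αε) * V k ω := fun k =>
    (hdrift k).mono fun ω hω hlt => hω.trans <| max_apply_le_add_mul
      (fun _ => hκmono.apply_le_self_of_lt_self hκlt) hψ hψα (hnonneg k ω) hlt.le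
  have hstart : reachValue μ V psihat αε T 0 ≤ reachBound psihat αε T v₀ := by
    simpa [hV0] using reachValue_zero_le (T := T) (hint 0) hαε hψα
      (ℱ.le 0 _ (measurableSet_reachedBy hadp 0))
  rw [← ofReal_measureReal]
  exact ENNReal.ofReal_le_ofReal <| (measureReal_reachedBy_le_reachValue (hnonneg T) hαε).trans <|
    (reachValue_le_reachValue_zero hadp hint hαε hψα hlinear T le_rfl).trans hstart

/-- Probabilistic reachability bound (Theorem 3.3, case 1): for a nonnegative
process with max-form drift `E[V_{k+1}|F_k] ≤ max{κ(V_k), psihat}` where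
`κ(s) ≥ khat s`, `κ < id`, and a level `αε ≥ psihat/khat`,
`P{sup_{0≤k≤T} V_k ≥ αε} ≤ 1 − (1 − V₀/αε)(1 − psihat/αε)^T`. -/
theorem reachability_bound_case1 {Ω : Type*} {m0 : MeasurableSpace Ω}
    (μ : Measure Ω) [IsProbabilityMeasure μ]
    (ℱ : Filtration ℕ m0) (V : ℕ → Ω → ℝ)
    (hadp : Adapted ℱ V) (hint : ∀ k, Integrable (V k) μ)
    (hnonneg : ∀ k ω, 0 ≤ V k ω)
    (κ : ℝ → ℝ) (hκmono : Monotone κ) (hκlt : ∀ s : ℝ, 0 < s → κ s < s)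
    (khat : ℝ) (hkhat0 : 0 < khat) (hkhat1 : khat < 1)
    (hκlb : ∀ s : ℝ, 0 ≤ s → khat * s ≤ κ s)
    (psihat : ℝ) (hψ : 0 ≤ psihat)
    (hdrift : ∀ k, ∀ᵐ ω ∂μ, (μ[V (k + 1)|ℱ k]) ω ≤ max (κ (V k ω)) psihat)
    (v₀ : ℝ) (hv₀ : 0 ≤ v₀) (hV0 : ∀ ω, V 0 ω = v₀)
    (T : ℕ) (αε : ℝ) (hαε : 0 < αε) (hlevel : psihat / khat ≤ αε) :
    μ {ω | ∃ k ≤ T, αε ≤ V k ω} ≤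
      ENNReal.ofReal (1 - (1 - v₀ / αε) * (1 - psihat / αε) ^ T) :=
  reachability_bound_case1_general μ ℱ V hadp hint hnonneg κ hκmono hκlt khat hkhat0 hkhat1 psihat
    hψ hdrift v₀ hV0 T αε hαε hlevel
end

section
/- For K∞ functions σ₁,...,σ_N and nonnegative functions S_i : X_i × X̂_i → ℝ≥0 such that α_i(‖h_i(x_i) − ĥ_i(x̂_i)‖) ≤ S_i(x_i, x̂_i) with α_i ∈ K∞, the function V(x, x̂) := max_i σ_i⁻¹(S_i(x_i, x̂_i)) satisfies β⁻¹(max_i ‖h_i(x_i) − ĥ_i(x̂_i)‖) ≤ V(x, x̂), where β(s) := max_i α_i⁻¹(σ_i(s)). -/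
open NNReal

/-!
Each subsystem bound inverts to `‖hᵢ xᵢ - hhatᵢ xhatᵢ‖ ≤ αᵢ⁻¹ (Sᵢ) ≤ αᵢ⁻¹ (σᵢ V) ≤ β V`, because
`Sᵢ ≤ σᵢ V` is just `σᵢ⁻¹ Sᵢ ≤ V` pushed through `σᵢ`. Taking the maximum over `i` and applying
the monotone inverse `β⁻¹` gives the claim.
-/

section RightInverse

variable {A B : Type*} [LinearOrder A] [Preorder B] {f : A → B} {g : B → A}

theorem StrictMono.le_rightInverse_apply_iff (hf : StrictMono f) (hg : Function.RightInverse g f)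
    {a : A} {b : B} : a ≤ g b ↔ f a ≤ b :=
  (hf.orderIsoOfRightInverse f g hg).le_symm_apply

theorem StrictMono.rightInverse_apply_le_iff (hf : StrictMono f) (hg : Function.RightInverse g f)
    {a : A} {b : B} : g b ≤ a ↔ b ≤ f a :=
  (hf.orderIsoOfRightInverse f g hg).symm_apply_le

theorem StrictMono.monotone_of_rightInverse (hf : StrictMono f)
    (hg : Function.RightInverse g f) : Monotone g :=
  (hf.orderIsoOfRightInverse f g hg).symm.monotone

end RightInverse

theorem monotone_ciSup_of_monotone {ι A L : Type*} [Finite ι] [Preorder A]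
    [ConditionallyCompleteLattice L] {φ : ι → A → L}
    (hφ : ∀ i, Monotone (φ i)) : Monotone fun s => ⨆ i, φ i s :=
  fun _ _ hab => ciSup_mono (Set.finite_range _).bddAbove fun i => hφ i hab

theorem composed_simulation_lower_bound_general {N : ℕ}
    (X Xhat : Fin N → Type*) (q : Fin N → ℕ)
    (h : ∀ i, X i → (Fin (q i) → ℝ)) (hhat : ∀ i, Xhat i → (Fin (q i) → ℝ))
    (S : ∀ i, X i → Xhat i → ℝ≥0)
    (α σ αinv σinv : Fin N → ℝ≥0 → ℝ≥0)
    -- K∞ properties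
    (hαm : ∀ i, StrictMono (α i))
    (hσm : ∀ i, StrictMono (σ i))
    -- inverses
    (hαinv : ∀ i, Function.LeftInverse (αinv i) (α i) ∧
      Function.RightInverse (αinv i) (α i))
    (hσinv : ∀ i, Function.LeftInverse (σinv i) (σ i) ∧
      Function.RightInverse (σinv i) (σ i))
    -- β and its inverse
    (β βinv : ℝ≥0 → ℝ≥0)
    (hβ : ∀ s, β s = ⨆ i : Fin N, αinv i (σ i s))
    (hβinv : Function.LeftInverse βinv β ∧ Function.RightInverse βinv β)
    -- the SPSF lower bound for each subsystem
    (hlow : ∀ i (xi : X i) (xhati : Xhat i),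
      α i ‖h i xi - hhat i xhati‖₊ ≤ S i xi xhati) :
    ∀ (x : ∀ i, X i) (xhat : ∀ i, Xhat i),
      βinv (⨆ i : Fin N, ‖h i (x i) - hhat i (xhat i)‖₊) ≤
        ⨆ i : Fin N, σinv i (S i (x i) (xhat i)) := by
  intro x xhat
  set V := ⨆ i : Fin N, σinv i (S i (x i) (xhat i))
  have hβ_mono : Monotone β := funext hβ ▸ monotone_ciSup_of_monotone fun i =>
    ((hαm i).monotone_of_rightInverse (hαinv i).2).comp (hσm i).monotone
  have hS_le (i : Fin N) : S i (x i) (xhat i) ≤ σ i V :=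
    ((hσm i).rightInverse_apply_le_iff (hσinv i).2).1 (le_ciSup (f := fun j => σinv j (S j (x j) (xhat j)))
      (Set.finite_range _).bddAbove i)
  have herr_le (i : Fin N) : ‖h i (x i) - hhat i (xhat i)‖₊ ≤ αinv i (σ i V) :=
    ((hαm i).le_rightInverse_apply_iff (hαinv i).2).2 ((hlow i (x i) (xhat i)).trans (hS_le i))
  rw [(hβ_mono.strictMono_of_injective hβinv.1.injective).rightInverse_apply_le_iff hβinv.2, hβ]
  exact ciSup_le' fun i => le_ciSup_of_le (Set.finite_range _).bddAbove i (herr_le i)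

/-- Compositional lower bound: if `αᵢ(‖hᵢ(xᵢ) − hhatᵢ(xhatᵢ)‖) ≤ Sᵢ(xᵢ, xhatᵢ)` for
each subsystem, then `V(x, xhat) := maxᵢ σᵢ⁻¹(Sᵢ(xᵢ, xhatᵢ))` satisfies
`β⁻¹(maxᵢ ‖hᵢ(xᵢ) − hhatᵢ(xhatᵢ)‖) ≤ V(x, xhat)` where `β(s) = maxᵢ αᵢ⁻¹(σᵢ(s))`. -/
theorem composed_simulation_lower_bound {N : ℕ} (hN : 0 < N)
    (X Xhat : Fin N → Type*) (q : Fin N → ℕ)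
    (h : ∀ i, X i → (Fin (q i) → ℝ)) (hhat : ∀ i, Xhat i → (Fin (q i) → ℝ))
    (S : ∀ i, X i → Xhat i → ℝ≥0)
    (α σ αinv σinv : Fin N → ℝ≥0 → ℝ≥0)
    -- K∞ properties
    (hαc : ∀ i, Continuous (α i)) (hαm : ∀ i, StrictMono (α i))
    (hα0 : ∀ i, α i 0 = 0)
    (hαtop : ∀ i, Filter.Tendsto (α i) Filter.atTop Filter.atTop)
    (hσc : ∀ i, Continuous (σ i)) (hσm : ∀ i, StrictMono (σ i))
    (hσ0 : ∀ i, σ i 0 = 0)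
    (hσtop : ∀ i, Filter.Tendsto (σ i) Filter.atTop Filter.atTop)
    -- inverses
    (hαinv : ∀ i, Function.LeftInverse (αinv i) (α i) ∧
      Function.RightInverse (αinv i) (α i))
    (hσinv : ∀ i, Function.LeftInverse (σinv i) (σ i) ∧
      Function.RightInverse (σinv i) (σ i))
    -- β and its inverse
    (β βinv : ℝ≥0 → ℝ≥0)
    (hβ : ∀ s, β s = ⨆ i : Fin N, αinv i (σ i s))
    (hβinv : Function.LeftInverse βinv β ∧ Function.RightInverse βinv β)
    -- the SPSF lower bound for each subsystem
    (hlow : ∀ i (xi : X i) (xhati : Xhat i),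
      α i ‖h i xi - hhat i xhati‖₊ ≤ S i xi xhati) :
    ∀ (x : ∀ i, X i) (xhat : ∀ i, Xhat i),
      βinv (⨆ i : Fin N, ‖h i (x i) - hhat i (xhat i)‖₊) ≤
        ⨆ i : Fin N, σinv i (S i (x i) (xhat i)) :=
  composed_simulation_lower_bound_general X Xhat q h hhat S α σ αinv σinv hαm hσm hαinv hσinv β βinv
    hβ hβinv hlow
end

section
/- Max-form drift combination: let S ≥ 0 and suppose E[S'] ≤ κ̂ S + c₁ w² + c₂ u² where 0 < κ̂ < 1, c₁, c₂, w, u ≥ 0. Then for any π̃ ∈ (0,1) and δ̃ > 0, with κ̃ = 1 − κ̂, E[S'] ≤ max{ (1 − (1 − π̃)κ̃) S, (1 + δ̃)(1/(κ̃ π̃)) c₁ w², (1 + 1/δ̃)(1/(κ̃ π̃)) c₂ u² }. -/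
/-! Writing `κ̃ = 1 - κ̂`, `α = 1 - (1 - π̃) κ̃ = κ̂ + π̃ κ̃` and `A = c₁ w²`, `B = c₂ u²`, the
drift bound is a weighted sum of the three candidates of the maximum:
`κ̂ S + A + B = (κ̂ / α) (α S) + (κ̃ π̃ / (1 + δ̃)) ((1 + δ̃) A / (κ̃ π̃))
  + (κ̃ π̃ / (1 + 1/δ̃)) ((1 + 1/δ̃) B / (κ̃ π̃))`.
Since `1/(1 + δ̃) + 1/(1 + 1/δ̃) = 1`, the weights sum to `κ̂ / α + κ̃ π̃ ≤ 1`, and a subconvex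
combination of three reals is at most their maximum as soon as that maximum is nonnegative,
which `S ≥ 0` guarantees. -/

lemma mul_add_mul_add_mul_le_max {a b c x y z : ℝ} (ha : 0 ≤ a) (hb : 0 ≤ b) (hc : 0 ≤ c)
    (habc : a + b + c ≤ 1) (hmax : 0 ≤ max (max x y) z) :
    a * x + b * y + c * z ≤ max (max x y) z := by
  set M := max (max x y) z
  have hxM : x ≤ M := le_max_of_le_left (le_max_left x y)
  have hyM : y ≤ M := le_max_of_le_left (le_max_right x y)
  have hzM : z ≤ M := le_max_right _ z
  calc a * x + b * y + c * z ≤ a * M + b * M + c * M := by gcongr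
    _ = (a + b + c) * M := by ring
    _ ≤ M := mul_le_of_le_one_left hmax habc

lemma inv_one_add_add_inv_one_add_inv {δ : ℝ} (hδ : 0 < δ) :
    (1 + δ)⁻¹ + (1 + δ⁻¹)⁻¹ = 1 := by
  field_simp
  ring

lemma div_add_le_one_of_add_le_one {a q : ℝ} (ha : 0 ≤ a) (hq : 0 < q) (haq : a + q ≤ 1) :
    a / (a + q) + q ≤ 1 := by
  rw [div_add' _ _ _ (by positivity), div_le_one (by positivity)]
  nlinarith

lemma drift_weights_sum_le_one {κ π δ : ℝ} (hκ₀ : 0 ≤ κ) (hκ₁ : κ < 1) (hπ₀ : 0 < π)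
    (hπ₁ : π ≤ 1) (hδ : 0 < δ) :
    κ / (1 - (1 - π) * (1 - κ)) + (1 - κ) * π / (1 + δ) + (1 - κ) * π / (1 + 1 / δ) ≤ 1 := by
  have hq : 0 < (1 - κ) * π := mul_pos (by linarith) hπ₀
  calc κ / (1 - (1 - π) * (1 - κ)) + (1 - κ) * π / (1 + δ) + (1 - κ) * π / (1 + 1 / δ)
      = κ / (κ + (1 - κ) * π) + (1 - κ) * π * ((1 + δ)⁻¹ + (1 + δ⁻¹)⁻¹) := by ring
    _ = κ / (κ + (1 - κ) * π) + (1 - κ) * π := by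
        rw [inv_one_add_add_inv_one_add_inv hδ, mul_one]
    _ ≤ 1 := div_add_le_one_of_add_le_one hκ₀ hq (by nlinarith)

theorem additive_to_max_drift_general (S E c₁ c₂ w u : ℝ)
    (hS : 0 ≤ S)
    (khat : ℝ) (hκ₀ : 0 < khat) (hκ₁ : khat < 1)
    (pit : ℝ) (hπ₀ : 0 < pit) (hπ₁ : pit < 1)
    (delt : ℝ) (hδ : 0 < delt)
    (hdrift : E ≤ khat * S + c₁ * w ^ 2 + c₂ * u ^ 2) :
    E ≤ max (max ((1 - (1 - pit) * (1 - khat)) * S)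
        ((1 + delt) * (1 / ((1 - khat) * pit)) * (c₁ * w ^ 2)))
        ((1 + 1 / delt) * (1 / ((1 - khat) * pit)) * (c₂ * u ^ 2)) := by
  have hgap : 0 < 1 - khat := by linarith
  have hα : 0 < 1 - (1 - pit) * (1 - khat) := by nlinarith
  calc E ≤ khat * S + c₁ * w ^ 2 + c₂ * u ^ 2 := hdrift
    _ = khat / (1 - (1 - pit) * (1 - khat)) * ((1 - (1 - pit) * (1 - khat)) * S)
        + (1 - khat) * pit / (1 + delt)
          * ((1 + delt) * (1 / ((1 - khat) * pit)) * (c₁ * w ^ 2))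
        + (1 - khat) * pit / (1 + 1 / delt)
          * ((1 + 1 / delt) * (1 / ((1 - khat) * pit)) * (c₂ * u ^ 2)) := by
        field_simp
    _ ≤ _ := mul_add_mul_add_mul_le_max (by positivity) (by positivity) (by positivity)
        (drift_weights_sum_le_one hκ₀.le hκ₁ hπ₀ hπ₁.le hδ)
        (le_max_of_le_left (le_max_of_le_left (mul_nonneg hα.le hS)))

/-- Conversion from additive-form to max-form drift conditions:
if `E ≤ khat S + c₁ w² + c₂ u²` then
`E ≤ max{(1 − (1 − pit)κ̃)S, (1 + delt)c₁w²/(κ̃pit), (1 + 1/delt)c₂u²/(κ̃pit)}`. -/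
theorem additive_to_max_drift (S E c₁ c₂ w u : ℝ)
    (hS : 0 ≤ S) (hE : 0 ≤ E) (hc₁ : 0 ≤ c₁) (hc₂ : 0 ≤ c₂)
    (hw : 0 ≤ w) (hu : 0 ≤ u)
    (khat : ℝ) (hκ₀ : 0 < khat) (hκ₁ : khat < 1)
    (pit : ℝ) (hπ₀ : 0 < pit) (hπ₁ : pit < 1)
    (delt : ℝ) (hδ : 0 < delt)
    (hdrift : E ≤ khat * S + c₁ * w ^ 2 + c₂ * u ^ 2) :
    E ≤ max (max ((1 - (1 - pit) * (1 - khat)) * S)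
        ((1 + delt) * (1 / ((1 - khat) * pit)) * (c₁ * w ^ 2)))
        ((1 + 1 / delt) * (1 / ((1 - khat) * pit)) * (c₂ * u ^ 2)) :=
  additive_to_max_drift_general S E c₁ c₂ w u hS khat hκ₀ hκ₁ pit hπ₀ hπ₁ delt hδ hdrift
end
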